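/- Let p be a prime, q a power of p, and α an algebraic number such that α is an algebraic integer and α is a unit at every finite place not above p. Suppose every complex absolute value of α equals q^{w/2} for some integer w (α is a q-Weil number of weight w) and every q-slope of α lies in [0, i] for an integer i ≥ 0. Then w ≤ 2i and w ≥ 0. -/

import Mathlib

/-!
Everything is read off the norm `N = N_{E/ℚ}(α)`, with `n = [E : ℚ]`. Over `ℂ` it is the product of
the `n` conjugates of `α`, so `|N| = q^{wn/2}`. Since `α` and `p^m α⁻¹` are integral, `N` is a
rational integer dividing `p^{mn}`, hence `N = ±p^k` and `k = rwn/2`, which gives `w ≥ 0`.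
Over `ℚ̄_p`, `N` is again the product of the conjugates, so `k = v(N) = ∑ v(σ α) ≤ n r i`.
-/

section AdditiveOnUnits

variable {K : Type*} [CommRing K] [IsDomain K] {v : K → ℝ}

lemma map_one_eq_zero_of_map_mul (hv : ∀ x y : K, x ≠ 0 → y ≠ 0 → v (x * y) = v x + v y) :
    v 1 = 0 := by
  have h := hv 1 1 one_ne_zero one_ne_zero
  rw [mul_one] at h
  linarith

lemma map_pow_eq_of_map_mul (hv : ∀ x y : K, x ≠ 0 → y ≠ 0 → v (x * y) = v x + v y)
    {x : K} (hx : x ≠ 0) (k : ℕ) : v (x ^ k) = k * v x := by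
  induction k with
  | zero => simp [map_one_eq_zero_of_map_mul hv]
  | succ k ih =>
    rw [pow_succ, hv _ _ (pow_ne_zero _ hx) hx, ih]
    push_cast
    ring

lemma map_prod_eq_of_map_mul (hv : ∀ x y : K, x ≠ 0 → y ≠ 0 → v (x * y) = v x + v y)
    {ι : Type*} (s : Finset ι) {f : ι → K} (hf : ∀ j ∈ s, f j ≠ 0) :
    v (∏ j ∈ s, f j) = ∑ j ∈ s, v (f j) := by
  classical
  induction s using Finset.induction_on with
  | empty => simp [map_one_eq_zero_of_map_mul hv]
  | insert a s ha ih =>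
    have hs : ∀ j ∈ s, f j ≠ 0 := fun j hj => hf j (Finset.mem_insert_of_mem hj)
    rw [Finset.prod_insert ha, Finset.sum_insert ha,
      hv _ _ (hf a (Finset.mem_insert_self a s)) (Finset.prod_ne_zero_iff.2 hs), ih hs]

end AdditiveOnUnits

section NormOfAlgebraicNumber

variable {E : Type*} [Field E] [Algebra ℚ E] [FiniteDimensional ℚ E]

lemma abs_norm_eq_pow_finrank_of_forall_norm_eq {α : E} {c : ℝ}
    (h : ∀ σ : E →+* ℂ, ‖σ α‖ = c) :
    |(Algebra.norm ℚ α : ℝ)| = c ^ Module.finrank ℚ E := by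
  have hprod := congrArg norm (Algebra.norm_eq_prod_embeddings ℚ ℂ α)
  rwa [norm_prod, Finset.prod_congr rfl fun σ _ => h σ.toRingHom, Finset.prod_const,
    Finset.card_univ, AlgHom.card, eq_ratCast, Complex.norm_ratCast] at hprod

lemma exists_abs_norm_eq_pow_of_isIntegral_pow_mul_inv {p : ℕ} (hp : p.Prime) {α : E}
    (hα : α ≠ 0) (hint : IsIntegral ℤ α) {m : ℕ} (hunit : IsIntegral ℤ ((p : E) ^ m * α⁻¹)) :
    ∃ k : ℕ, |Algebra.norm ℚ α| = (p : ℚ) ^ k := by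
  obtain ⟨z, hz⟩ := IsIntegrallyClosed.isIntegral_iff.1 (Algebra.isIntegral_norm ℚ hint)
  obtain ⟨z', hz'⟩ := IsIntegrallyClosed.isIntegral_iff.1 (Algebra.isIntegral_norm ℚ hunit)
  have hzz' : z * z' = (p : ℤ) ^ (m * Module.finrank ℚ E) := by
    have hmul : α * ((p : E) ^ m * α⁻¹) = algebraMap ℚ E ((p : ℚ) ^ m) := by
      field_simp
      simp
    have := congrArg (Algebra.norm ℚ) hmul
    rw [map_mul, Algebra.norm_algebraMap, ← hz, ← hz', ← pow_mul] at this
    simp only [eq_intCast] at this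
    exact_mod_cast this
  have hdvd : z.natAbs ∣ p ^ (m * Module.finrank ℚ E) := by
    simpa [Int.natAbs_pow] using Int.natAbs_dvd_natAbs.2 ⟨z', hzz'.symm⟩
  obtain ⟨k, -, hk⟩ := (Nat.dvd_prime_pow hp).1 hdvd
  refine ⟨k, ?_⟩
  rw [← hz, eq_intCast, ← Int.cast_abs, Int.abs_eq_natAbs, hk]
  push_cast
  rfl

lemma map_algebraMap_norm_le_finrank_mul {L : Type*} [Field L] [Algebra ℚ L] [IsAlgClosed L]
    {v : L → ℝ} (hv : ∀ x y : L, x ≠ 0 → y ≠ 0 → v (x * y) = v x + v y) {α : E} (hα : α ≠ 0)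
    {c : ℝ} (hc : ∀ σ : E →+* L, v (σ α) ≤ c) :
    v (algebraMap ℚ L (Algebra.norm ℚ α)) ≤ Module.finrank ℚ E * c := by
  rw [Algebra.norm_eq_prod_embeddings ℚ L α,
    map_prod_eq_of_map_mul hv _ fun σ _ => (map_ne_zero σ).2 hα,
    ← AlgHom.card ℚ E L, ← Finset.card_univ, ← nsmul_eq_mul]
  exact Finset.sum_le_card_nsmul _ _ _ fun σ _ => hc σ.toRingHom

lemma map_algebraMap_eq_of_abs_eq_pow {L : Type*} [Field L] [Algebra ℚ L]
    {v : L → ℝ} (hv : ∀ x y : L, x ≠ 0 → y ≠ 0 → v (x * y) = v x + v y) {p : ℕ} (hp : p ≠ 0)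
    (hvp : v (algebraMap ℚ L p) = 1) {x : ℚ} {k : ℕ} (hx : |x| = (p : ℚ) ^ k) :
    v (algebraMap ℚ L x) = k := by
  have hx0 : x ≠ 0 := by
    rintro rfl
    simp only [abs_zero] at hx
    exact pow_ne_zero k (Nat.cast_ne_zero.2 hp) hx.symm
  have hp0 : algebraMap ℚ L p ≠ 0 := (map_ne_zero _).2 (Nat.cast_ne_zero.2 hp)
  -- squaring removes the sign of `x`
  have hsq : x ^ 2 = (p : ℚ) ^ (2 * k) := by rw [← sq_abs, hx, ← pow_mul, mul_comm]
  have := congrArg (fun y => v (algebraMap ℚ L y)) hsq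
  simp only [map_pow] at this
  rw [map_pow_eq_of_map_mul hv ((map_ne_zero _).2 hx0), map_pow_eq_of_map_mul hv hp0, hvp] at this
  push_cast at this
  linarith

end NormOfAlgebraicNumber

lemma natCast_eq_of_pow_eq_rpow_pow {p w : ℝ} (hp : 1 < p) {k r n : ℕ}
    (h : p ^ k = ((p ^ r) ^ (w / 2)) ^ n) : (k : ℝ) = r * w * n / 2 := by
  have hlog := congrArg Real.log h
  rw [Real.log_pow, Real.log_pow, Real.log_rpow (by positivity), Real.log_pow] at hlog
  have := Real.log_pos hp
  field_simp
  nlinarith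

lemma valuation_algebraMap_natCast_prime (p : ℕ) [Fact p.Prime] {v : AlgebraicClosure ℚ_[p] → ℝ}
    (hvp : ∀ x : ℚ_[p], x ≠ 0 →
      v (algebraMap ℚ_[p] (AlgebraicClosure ℚ_[p]) x) = (x.valuation : ℝ)) :
    v (algebraMap ℚ (AlgebraicClosure ℚ_[p]) p) = 1 := by
  rw [map_natCast, ← map_natCast (algebraMap ℚ_[p] _),
    hvp _ (Nat.cast_ne_zero.2 (Fact.out : p.Prime).ne_zero), Padic.valuation_p, Int.cast_one]

theorem stmt_14_general (p : ℕ) [Fact p.Prime] (r : ℕ) (hr : 0 < r) (q : ℕ) (hq : q = p ^ r)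
    {E : Type*} [Field E] [Algebra ℚ E] [FiniteDimensional ℚ E]
    (α : E) (w : ℤ)
    (hWeil : ∀ σ : E →+* ℂ, ‖σ α‖ = (q : ℝ) ^ ((w : ℝ) / 2))
    (hint : IsIntegral ℤ α)
    (hunit : ∃ m : ℕ, IsIntegral ℤ ((p : E) ^ m * α⁻¹))
    (v : AlgebraicClosure ℚ_[p] → ℝ)
    (hvmul : ∀ x y : AlgebraicClosure ℚ_[p], x ≠ 0 → y ≠ 0 → v (x * y) = v x + v y)
    (hvp : ∀ x : ℚ_[p], x ≠ 0 →
      v (algebraMap ℚ_[p] (AlgebraicClosure ℚ_[p]) x) = (x.valuation : ℝ))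
    (i : ℕ)
    (hslope : ∀ ι : E →+* AlgebraicClosure ℚ_[p],
      0 ≤ v (ι α) / (r : ℝ) ∧ v (ι α) / (r : ℝ) ≤ (i : ℝ)) :
    0 ≤ w ∧ w ≤ 2 * (i : ℤ) := by
  obtain ⟨m, hm⟩ := hunit
  have hp : p.Prime := Fact.out
  subst hq
  have hnorm := abs_norm_eq_pow_finrank_of_forall_norm_eq hWeil
  have hα : α ≠ 0 := by
    rintro rfl
    have hq : (0 : ℝ) < (p ^ r : ℕ) := Nat.cast_pos.2 (pow_pos hp.pos r)
    exact (pow_pos (Real.rpow_pos_of_pos hq _) _).ne (by simpa using hnorm)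
  obtain ⟨k, hk⟩ := exists_abs_norm_eq_pow_of_isIntegral_pow_mul_inv hp hα hint hm
  have hkw : (k : ℝ) = r * w * Module.finrank ℚ E / 2 := by
    refine natCast_eq_of_pow_eq_rpow_pow (Nat.one_lt_cast.2 hp.one_lt) ?_
    rw [← Nat.cast_pow p r, ← hnorm, ← Rat.cast_abs, hk]
    push_cast
    rfl
  have hr' : (0 : ℝ) < r := by exact_mod_cast hr
  have hkn : (k : ℝ) ≤ Module.finrank ℚ E * (r * i) := by
    rw [← map_algebraMap_eq_of_abs_eq_pow hvmul hp.ne_zero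
      (valuation_algebraMap_natCast_prime p hvp) hk]
    exact map_algebraMap_norm_le_finrank_mul hvmul hα fun σ =>
      (div_le_iff₀' hr').1 (hslope σ).2
  have hn : (0 : ℝ) < Module.finrank ℚ E := by exact_mod_cast Module.finrank_pos
  constructor
  · exact_mod_cast (show (0 : ℝ) ≤ w by nlinarith [k.cast_nonneg (α := ℝ), mul_pos hr' hn])
  · exact_mod_cast (show (w : ℝ) ≤ 2 * i by nlinarith [mul_pos hr' hn])

/-- Let `p` be a prime, `q = p^r` a power of `p`, and `α` an algebraic
number (generating a number field `E`) which is an algebraic integer and a unit at every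
finite place not above `p` (i.e. `p^m·α⁻¹` is an algebraic integer for some `m`).
Suppose every complex absolute value of `α` equals `q^{w/2}` for some integer `w`
(`α` is a `q`-Weil number of weight `w`) and every `q`-slope of `α` (the values
`v(ι α)/r` for embeddings `ι : E → ℚ̄_p`, with `v` the valuation on the algebraic
closure of `ℚ_p` extending the `p`-adic valuation with `v(p) = 1`) lies in `[0, i]`
for an integer `i ≥ 0`.  Then `0 ≤ w` and `w ≤ 2i`. -/
theorem stmt_14 (p : ℕ) [Fact p.Prime] (r : ℕ) (hr : 0 < r) (q : ℕ) (hq : q = p ^ r)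
    {E : Type*} [Field E] [Algebra ℚ E] [FiniteDimensional ℚ E]
    (α : E) (hgen : Algebra.adjoin ℚ {α} = ⊤) (w : ℤ)
    (hWeil : ∀ σ : E →+* ℂ, ‖σ α‖ = (q : ℝ) ^ ((w : ℝ) / 2))
    (hint : IsIntegral ℤ α)
    (hunit : ∃ m : ℕ, IsIntegral ℤ ((p : E) ^ m * α⁻¹))
    (v : AlgebraicClosure ℚ_[p] → ℝ)
    (hvmul : ∀ x y : AlgebraicClosure ℚ_[p], x ≠ 0 → y ≠ 0 → v (x * y) = v x + v y)
    (hvadd : ∀ x y : AlgebraicClosure ℚ_[p],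
      x ≠ 0 → y ≠ 0 → x + y ≠ 0 → min (v x) (v y) ≤ v (x + y))
    (hvp : ∀ x : ℚ_[p], x ≠ 0 →
      v (algebraMap ℚ_[p] (AlgebraicClosure ℚ_[p]) x) = (x.valuation : ℝ))
    (i : ℕ)
    (hslope : ∀ ι : E →+* AlgebraicClosure ℚ_[p],
      0 ≤ v (ι α) / (r : ℝ) ∧ v (ι α) / (r : ℝ) ≤ (i : ℝ)) :
    0 ≤ w ∧ w ≤ 2 * (i : ℤ) :=
  stmt_14_general p r hr q hq α w hWeil hint hunit v hvmul hvp i hslope
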